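/- Suppose the MDP is transient and the iterates w^{t,*} (defined by w^{0,*} = −1 and w^{t+1,*} = L* w^{t,*}) are bounded below, i.e. there is M ∈ ℝ with (w^{t,*})_s ≥ M for all t, s, and let w^{∞,*} := lim_{t→∞} w^{t,*}. Then value iteration with the optimistic initialization w^0 = 0 (the zero vector) also converges to the optimal exponential value function: the iterates u^0 = 0, u^{t+1} = L* u^t satisfy lim_{t→∞} u^t = w^{∞,*}. -/

import Mathlib

open Matrix Filter

/-- Spectral radius of a real square matrix: the maximum modulus of its complex eigenvalues. -/
noncomputable def specRad {S : Type*} [Fintype S] [DecidableEq S] (M : Matrix S S ℝ) : ℝ :=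
  sSup ((fun z : ℂ => ‖z‖) '' spectrum ℂ (M.map Complex.ofReal))

/-- Exponential transition matrix `B^a` for action `a`. -/
noncomputable def Bmat {S A : Type*} (p r : S → A → Option S → ℝ) (β : ℝ) (a : A) :
    Matrix S S ℝ :=
  Matrix.of fun s s' => p s a (some s') * Real.exp (-β * r s a (some s'))

/-- Exponential termination vector `b^a` for action `a` (`none` is the sink state `e`). -/
noncomputable def bvec {S A : Type*} (p r : S → A → Option S → ℝ) (β : ℝ) (a : A) : S → ℝ :=
  fun s => p s a none * Real.exp (-β * r s a none)

/-- Optimal exponential Bellman operator `L*`. -/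
noncomputable def Lstar {S A : Type*} [Fintype S] [Fintype A] [Nonempty A]
    (p r : S → A → Option S → ℝ) (β : ℝ) (w : S → ℝ) : S → ℝ :=
  fun s => Finset.univ.sup' Finset.univ_nonempty
    (fun a : A => (Bmat p r β a *ᵥ w) s - bvec p r β a s)

/-- Transition matrix `P^d` (restricted to non-sink states) of a deterministic decision rule. -/
def Pmat {S A : Type*} (p : S → A → Option S → ℝ) (d : S → A) : Matrix S S ℝ :=
  Matrix.of fun s s' => p s (d s) (some s')

/-!
The optimistic iterates decrease (`L* 0 ≤ 0`), dominate the pessimistic ones (monotonicity of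
`L*`), and so converge to a fixed point `v ≤ 0` of `L*` with `w^{∞,*} ≤ v`. Transience means
that under any decision rule `d` no nonempty set of states is closed and sink-free, since its
indicator `x` would satisfy `0 ≤ x ≤ P^d x` while `(P^d)^n → 0` by Gelfand's formula. Hence
any `y ≥ 0` with `c b^d + B^d y ≤ y`, `c > 0`, is strictly positive: its zero set is closed and
sink-free. With `d` greedy for `v` this applies first to `y = -v`, and then to
`y = α (-v) - (v - w^{∞,*})`, with `α` the least factor making `y ≥ 0`, which vanishes somewhere;
so `α ≤ 0`, i.e. `v ≤ w^{∞,*}`.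
-/

open scoped Topology

theorem tendsto_pow_nhds_zero_of_spectralRadius_lt_one {𝔸 : Type*} [NormedRing 𝔸]
    [NormedAlgebra ℂ 𝔸] [CompleteSpace 𝔸] {a : 𝔸} (ha : spectralRadius ℂ a < 1) :
    Tendsto (a ^ ·) atTop (𝓝 0) := by
  obtain ⟨r, har, hr1⟩ := ENNReal.lt_iff_exists_nnreal_btwn.mp ha
  have hr1 : (r : ℝ) < 1 := by exact_mod_cast hr1
  have hgelfand := spectrum.pow_nnnorm_pow_one_div_tendsto_nhds_spectralRadius a
  have hbound : ∀ᶠ n : ℕ in atTop, ‖a ^ n‖ ≤ (r : ℝ) ^ n := by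
    filter_upwards [hgelfand.eventually_lt_const har, eventually_gt_atTop 0] with n hn hn0
    have hn0 : (0 : ℝ) < n := by exact_mod_cast hn0
    rw [one_div, ← ENNReal.coe_rpow_of_nonneg _ (inv_nonneg.mpr hn0.le), ENNReal.coe_lt_coe,
      NNReal.rpow_inv_lt_iff hn0, NNReal.rpow_natCast] at hn
    exact_mod_cast hn.le
  exact squeeze_zero_norm' hbound (tendsto_pow_atTop_nhds_zero_of_lt_one r.coe_nonneg hr1)

namespace Matrix

variable {S : Type*} [Fintype S] [DecidableEq S]

attribute [local instance] Matrix.linftyOpNormedRing Matrix.linftyOpNormedAlgebra in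
theorem tendsto_pow_nhds_zero_of_specRad_lt_one {P : Matrix S S ℝ} (hP : specRad P < 1) :
    Tendsto (P ^ ·) atTop (𝓝 0) := by
  have hbdd : BddAbove ((fun z : ℂ => ‖z‖) '' spectrum ℂ (P.map Complex.ofReal)) :=
    ((spectrum.isCompact _).image continuous_norm).bddAbove
  have hρ : spectralRadius ℂ (P.map Complex.ofReal) < 1 := by
    refine lt_of_le_of_lt (iSup₂_le fun z hz => ?_) (ENNReal.ofReal_lt_one.mpr hP)
    rw [← ENNReal.ofReal_coe_nnreal, coe_nnnorm]
    exact ENNReal.ofReal_le_ofReal (le_csSup hbdd ⟨z, hz, rfl⟩)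
  have hre := ((continuous_id.matrix_map Complex.continuous_re).tendsto 0).comp
    (tendsto_pow_nhds_zero_of_spectralRadius_lt_one hρ)
  convert hre using 1
  · ext n : 1
    simp only [Function.comp_apply, id]
    rw [show P.map Complex.ofReal = Complex.ofRealHom.mapMatrix P from rfl, ← map_pow]
    ext
    simp
  · simp

theorem eq_zero_of_le_mulVec_of_specRad_lt_one {P : Matrix S S ℝ} (hP : specRad P < 1)
    (hP0 : ∀ i j, 0 ≤ P i j) {x : S → ℝ} (hx0 : 0 ≤ x) (hx : x ≤ P *ᵥ x) : x = 0 := by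
  have hle_pow : ∀ n : ℕ, x ≤ P ^ n *ᵥ x := by
    intro n
    induction n with
    | zero => simp
    | succ n ih =>
      calc x ≤ P *ᵥ x := hx
        _ ≤ P *ᵥ (P ^ n *ᵥ x) := fun s => dotProduct_le_dotProduct_of_nonneg_left ih (hP0 s)
        _ = P ^ (n + 1) *ᵥ x := by rw [mulVec_mulVec, pow_succ']
  have hlim : Tendsto (fun n : ℕ => P ^ n *ᵥ x) atTop (𝓝 0) := by
    have hcont : Continuous fun Q : Matrix S S ℝ => Q *ᵥ x :=
      continuous_id.matrix_mulVec continuous_const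
    simpa [Function.comp_def] using
      (hcont.tendsto 0).comp (tendsto_pow_nhds_zero_of_specRad_lt_one hP)
  exact le_antisymm (ge_of_tendsto' hlim hle_pow) hx0

end Matrix

theorem apply_eq_of_tendsto_of_succ {X : Type*} [TopologicalSpace X] [T2Space X] {f : X → X}
    (hf : Continuous f) {x : ℕ → X} (hx : ∀ t, x (t + 1) = f (x t)) {y : X}
    (hlim : Tendsto x atTop (𝓝 y)) : f y = y := by
  refine tendsto_nhds_unique ?_ ((tendsto_add_atTop_iff_nat 1).2 hlim)
  simp only [hx]
  exact (hf.tendsto y).comp hlim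

section MDP

variable {S A : Type*} {p r : S → A → Option S → ℝ} {β : ℝ}

theorem Bmat_nonneg (hp : ∀ s a s', 0 ≤ p s a s') (a : A) (s s' : S) :
    0 ≤ Bmat p r β a s s' :=
  mul_nonneg (hp _ _ _) (Real.exp_pos _).le

theorem bvec_nonneg (hp : ∀ s a s', 0 ≤ p s a s') (a : A) (s : S) : 0 ≤ bvec p r β a s :=
  mul_nonneg (hp _ _ _) (Real.exp_pos _).le

theorem Bmat_eq_zero_iff {a : A} {s s' : S} : Bmat p r β a s s' = 0 ↔ p s a (some s') = 0 := by
  simp [Bmat, Real.exp_ne_zero]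

theorem bvec_eq_zero_iff {a : A} {s : S} : bvec p r β a s = 0 ↔ p s a none = 0 := by
  simp [bvec, Real.exp_ne_zero]

variable [Fintype S] [DecidableEq S]

theorem eq_empty_of_Pmat_closed (hp : ∀ s a s', 0 ≤ p s a s')
    (hp_sum : ∀ s a, ∑ s' : Option S, p s a s' = 1) {d : S → A} (hd : specRad (Pmat p d) < 1)
    {Z : Set S} (hsink : ∀ s ∈ Z, p s (d s) none = 0)
    (hclosed : ∀ s ∈ Z, ∀ s' ∉ Z, p s (d s) (some s') = 0) : Z = ∅ := by
  classical
  set x : S → ℝ := Z.indicator 1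
  have hx0 : 0 ≤ x := Set.indicator_nonneg fun _ _ => zero_le_one
  have hx : x ≤ Pmat p d *ᵥ x := by
    intro s
    by_cases hs : s ∈ Z
    · have hrow : ∑ s', p s (d s) (some s') = 1 := by
        simpa [Fintype.sum_option, hsink s hs] using hp_sum s (d s)
      have hPx : (Pmat p d *ᵥ x) s = ∑ s', p s (d s) (some s') := by
        refine Finset.sum_congr rfl fun s' _ => ?_
        by_cases hs' : s' ∈ Z
        · simp [Pmat, x, hs']
        · simp [Pmat, x, hs', hclosed s hs s' hs']
      simp [x, hs, hPx, hrow]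
    · rw [show x s = 0 by simp [x, hs]]
      exact dotProduct_nonneg_of_nonneg (fun s' => hp _ _ _) hx0
  have hx_zero := Matrix.eq_zero_of_le_mulVec_of_specRad_lt_one hd (fun _ _ => hp _ _ _) hx0 hx
  exact Set.eq_empty_iff_forall_notMem.mpr fun s hs => by
    simpa [x, hs] using congrFun hx_zero s

theorem pos_of_smul_bvec_add_Bmat_mulVec_le (hp : ∀ s a s', 0 ≤ p s a s')
    (hp_sum : ∀ s a, ∑ s' : Option S, p s a s' = 1) {d : S → A} (hd : specRad (Pmat p d) < 1)
    {y : S → ℝ} (hy : 0 ≤ y) {c : ℝ} (hc : 0 < c)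
    (h : ∀ s, c * bvec p r β (d s) s + (Bmat p r β (d s) *ᵥ y) s ≤ y s) (s : S) : 0 < y s := by
  have hzero : ∀ s, y s = 0 → bvec p r β (d s) s = 0 ∧ (Bmat p r β (d s) *ᵥ y) s = 0 := by
    intro s hs
    have hb : 0 ≤ c * bvec p r β (d s) s := mul_nonneg hc.le (bvec_nonneg hp (d s) s)
    have hB : 0 ≤ (Bmat p r β (d s) *ᵥ y) s :=
      dotProduct_nonneg_of_nonneg (Bmat_nonneg hp (d s) s) hy
    have := h s
    exact ⟨(mul_eq_zero.mp (by linarith)).resolve_left hc.ne', by linarith⟩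
  suffices hZ : {s | y s = 0} = ∅ from
    (hy s).lt_of_ne fun hs => (Set.eq_empty_iff_forall_notMem.mp hZ s) hs.symm
  refine eq_empty_of_Pmat_closed hp hp_sum hd (fun s hs => bvec_eq_zero_iff.mp (hzero s hs).1) ?_
  intro s hs s' hs'
  have hterm := (Finset.sum_eq_zero_iff_of_nonneg fun j _ =>
    mul_nonneg (Bmat_nonneg hp (d s) s j) (hy j)).mp (hzero s hs).2 s' (Finset.mem_univ _)
  exact Bmat_eq_zero_iff.mp ((mul_eq_zero.mp hterm).resolve_right hs')

end MDP

section Bellman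

variable {S A : Type*} [Fintype S] [Fintype A] [Nonempty A] {p r : S → A → Option S → ℝ} {β : ℝ}

theorem sub_le_Lstar (x : S → ℝ) (a : A) (s : S) :
    (Bmat p r β a *ᵥ x) s - bvec p r β a s ≤ Lstar p r β x s :=
  Finset.le_sup' (fun a : A => (Bmat p r β a *ᵥ x) s - bvec p r β a s) (Finset.mem_univ a)

theorem exists_Lstar_eq (x : S → ℝ) (s : S) :
    ∃ a : A, Lstar p r β x s = (Bmat p r β a *ᵥ x) s - bvec p r β a s := by
  obtain ⟨a, -, ha⟩ := Finset.exists_mem_eq_sup' Finset.univ_nonempty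
    (fun a : A => (Bmat p r β a *ᵥ x) s - bvec p r β a s)
  exact ⟨a, ha⟩

theorem Lstar_monotone (hp : ∀ s a s', 0 ≤ p s a s') : Monotone (Lstar p r β) :=
  fun _ _ hxy s => Finset.sup'_le _ _ fun a _ =>
    (sub_le_sub_right (dotProduct_le_dotProduct_of_nonneg_left hxy (Bmat_nonneg hp a s)) _).trans
      (sub_le_Lstar _ a s)

theorem Lstar_zero_nonpos (hp : ∀ s a s', 0 ≤ p s a s') : Lstar p r β 0 ≤ 0 :=
  fun s => Finset.sup'_le _ _ fun a _ => by simpa using bvec_nonneg hp a s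

theorem continuous_Lstar : Continuous (Lstar p r β) :=
  continuous_pi fun _ => Continuous.finset_sup'_apply _ fun _ _ =>
    ((continuous_apply _).comp (continuous_const.matrix_mulVec continuous_id)).sub continuous_const

variable [DecidableEq S] (hp : ∀ s a s', 0 ≤ p s a s')
  (hp_sum : ∀ s a, ∑ s' : Option S, p s a s' = 1)
  (htransient : ∀ d : S → A, specRad (Pmat p d) < 1)
include hp hp_sum htransient

-- For `d` greedy at `v`, `-v = b^d + B^d (-v)`.
theorem neg_of_Lstar_eq_self {v : S → ℝ} (hv : Lstar p r β v = v) (hv0 : v ≤ 0) (s : S) :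
    v s < 0 := by
  choose d hd using exists_Lstar_eq (p := p) (r := r) (β := β) v
  refine neg_pos.mp (pos_of_smul_bvec_add_Bmat_mulVec_le (r := r) (β := β) hp hp_sum
    (htransient d) (neg_nonneg.mpr hv0) one_pos (fun s => ?_) s)
  have hvs := hd s
  rw [hv] at hvs
  rw [mulVec_neg, Pi.neg_apply, Pi.neg_apply]
  linarith

theorem le_of_Lstar_eq_self_of_Lstar_le {v w : S → ℝ} (hv : Lstar p r β v = v) (hv0 : v ≤ 0)
    (hw : Lstar p r β w ≤ w) : v ≤ w := by
  choose d hd using exists_Lstar_eq (p := p) (r := r) (β := β) v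
  have hv_eq : ∀ s, v s = (Bmat p r β (d s) *ᵥ v) s - bvec p r β (d s) s :=
    fun s => (congrFun hv s).symm.trans (hd s)
  have hneg := neg_of_Lstar_eq_self hp hp_sum htransient hv hv0
  have hδ : ∀ s, (v - w) s ≤ (Bmat p r β (d s) *ᵥ (v - w)) s := by
    intro s
    have hws := (sub_le_Lstar w (d s) s).trans (hw s)
    rw [mulVec_sub, Pi.sub_apply, Pi.sub_apply]
    linarith [hv_eq s]
  intro s₁
  by_contra! hs₁
  -- `α` is the least multiple of `-v` dominating `v - w`; it is attained at `s₀`.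
  obtain ⟨s₀, -, hs₀⟩ := Finset.univ.exists_max_image (fun s => (v - w) s / -v s)
    ⟨s₁, Finset.mem_univ _⟩
  set α := (v - w) s₀ / -v s₀ with hα_def
  have hδα : ∀ s, (v - w) s ≤ α * -v s := fun s =>
    (div_le_iff₀ (neg_pos.mpr (hneg s))).mp (hs₀ s (Finset.mem_univ s))
  have hα : 0 < α := (div_pos (sub_pos.mpr hs₁) (neg_pos.mpr (hneg s₁))).trans_le
    (hs₀ s₁ (Finset.mem_univ _))
  have hy := pos_of_smul_bvec_add_Bmat_mulVec_le (r := r) (β := β) hp hp_sum (htransient d)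
    (y := fun s => α * -v s - (v - w) s) (fun s => sub_nonneg.mpr (hδα s)) hα (fun s => by
      have hsplit : (Bmat p r β (d s) *ᵥ (fun s => α * -v s - (v - w) s)) s
          = α * -(Bmat p r β (d s) *ᵥ v) s - (Bmat p r β (d s) *ᵥ (v - w)) s := by
        simp only [mulVec, dotProduct, Finset.mul_sum, ← Finset.sum_neg_distrib,
          ← Finset.sum_sub_distrib]
        exact Finset.sum_congr rfl fun _ _ => by ring
      rw [hsplit]
      nlinarith [hδ s, hv_eq s]) s₀
  rw [hα_def, div_mul_cancel₀ _ (neg_pos.mpr (hneg s₀)).ne', sub_self] at hy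
  exact hy.false

end Bellman

theorem stmt19_general
    {S A : Type*} [Fintype S] [DecidableEq S] [Fintype A] [Nonempty A]
    (p r : S → A → Option S → ℝ) (β : ℝ)
    (hp_nonneg : ∀ s a s', 0 ≤ p s a s')
    (hp_sum : ∀ s a, ∑ s' : Option S, p s a s' = 1)
    (htransient : ∀ d : S → A, specRad (Pmat p d) < 1)
    (w : ℕ → S → ℝ)
    (hw0 : w 0 = fun _ => -1)
    (hwsucc : ∀ t, w (t + 1) = Lstar p r β (w t))
    (M : ℝ) (hM : ∀ t s, M ≤ w t s)
    (winf : S → ℝ)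
    (hwinf : Filter.Tendsto w Filter.atTop (nhds winf))
    (u : ℕ → S → ℝ)
    (hu0 : u 0 = fun _ => 0)
    (husucc : ∀ t, u (t + 1) = Lstar p r β (u t)) :
    Filter.Tendsto u Filter.atTop (nhds winf) := by
  have hwu : ∀ t, w t ≤ u t := by
    intro t
    induction t with
    | zero => rw [hw0, hu0]; intro s; norm_num
    | succ t ih => rw [hwsucc, husucc]; exact Lstar_monotone hp_nonneg ih
  have hu_anti : Antitone u := by
    refine antitone_nat_of_succ_le fun t => ?_
    induction t with
    | zero => rw [husucc, hu0]; exact Lstar_zero_nonpos hp_nonneg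
    | succ t ih =>
      exact (husucc (t + 1)).trans_le ((Lstar_monotone hp_nonneg ih).trans_eq (husucc t).symm)
  have hu_bdd : BddBelow (Set.range u) := by
    refine ⟨fun _ => M, ?_⟩
    rintro _ ⟨t, rfl⟩ s
    exact (hM t s).trans (hwu t s)
  have hu_lim : Tendsto u atTop (𝓝 (⨅ t, u t)) := tendsto_atTop_ciInf hu_anti hu_bdd
  have hu_fix := apply_eq_of_tendsto_of_succ continuous_Lstar husucc hu_lim
  have hw_fix := apply_eq_of_tendsto_of_succ continuous_Lstar hwsucc hwinf
  have hu_nonpos : ⨅ t, u t ≤ 0 := (ciInf_le hu_bdd 0).trans_eq hu0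
  have hw_le_u : winf ≤ ⨅ t, u t := le_of_tendsto_of_tendsto' hwinf hu_lim hwu
  have hu_le_w : ⨅ t, u t ≤ winf :=
    le_of_Lstar_eq_self_of_Lstar_le hp_nonneg hp_sum htransient hu_fix hu_nonpos hw_fix.le
  rwa [le_antisymm hu_le_w hw_le_u] at hu_lim

theorem stmt19
    {S A : Type*} [Fintype S] [DecidableEq S] [Nonempty S] [Fintype A] [Nonempty A]
    (p r : S → A → Option S → ℝ) (β : ℝ) (hβ : 0 < β)
    (hp_nonneg : ∀ s a s', 0 ≤ p s a s')
    (hp_sum : ∀ s a, ∑ s' : Option S, p s a s' = 1)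
    (htransient : ∀ d : S → A, specRad (Pmat p d) < 1)
    (w : ℕ → S → ℝ)
    (hw0 : w 0 = fun _ => -1)
    (hwsucc : ∀ t, w (t + 1) = Lstar p r β (w t))
    (M : ℝ) (hM : ∀ t s, M ≤ w t s)
    (winf : S → ℝ)
    (hwinf : Filter.Tendsto w Filter.atTop (nhds winf))
    (u : ℕ → S → ℝ)
    (hu0 : u 0 = fun _ => 0)
    (husucc : ∀ t, u (t + 1) = Lstar p r β (u t)) :
    Filter.Tendsto u Filter.atTop (nhds winf) :=
  stmt19_general p r β hp_nonneg hp_sum htransient w hw0 hwsucc M hM winf hwinf u hu0 husucc
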